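/- arXiv:2503.02314 — 2 statements merged into one kernel-verified Lean document; each statement's English description precedes it below -/
import Mathlib

section
/- For all 0 ≤ s < t ≤ T, the inverse operators satisfy ‖ι_{-t}^* − ι_{-s}^*‖_{L(H)} ≤ c1⁴ ∫_s^t ‖Φ(r)‖_{L(H)} dr, where c1 is the constant from (C1). -/
/-!
Writing `ι_{-t} - ι_{-s} = ι_{-t} (ι_s - ι_t) ι_{-s}`, each inverse contributes a factor `c1²`.
The difference `ι_t - ι_s` is self-adjoint with quadratic form `x ↦ ∫_s^t ⟪x, Φ(r) x⟫ dr`, and the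
norm of a self-adjoint operator is the supremum of its quadratic form on the unit sphere, so
`‖ι_t - ι_s‖ ≤ ∫_s^t ‖Φ(r)‖ dr`.
-/

open MeasureTheory Set
open scoped RealInnerProductSpace

section
variable {𝕜 E : Type*} [RCLike 𝕜] [NormedAddCommGroup E] [InnerProductSpace 𝕜 E]

theorem ContinuousLinearMap.opNorm_le_of_abs_re_inner_map_self_le {T : E →L[𝕜] E}
    (hT : (T : E →ₗ[𝕜] E).IsSymmetric) {M : ℝ} (hM : 0 ≤ M)
    (h : ∀ x, |RCLike.re (inner 𝕜 (T x) x)| ≤ M * ‖x‖ ^ 2) : ‖T‖ ≤ M := by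
  rw [T.norm_eq_iSup_rayleighQuotient hT]
  refine ciSup_le fun x => ?_
  rcases eq_or_ne x 0 with rfl | hx
  · simpa using hM
  rw [rayleighQuotient, reApplyInnerSelf_apply, abs_div, abs_sq, div_le_iff₀ (by positivity)]
  exact h x

end

theorem sub_eq_mul_sub_mul_of_mul_eq_one {R : Type*} [Ring R] {a a' b b' : R}
    (ha : a' * a = 1) (hb : b * b' = 1) : a' - b' = a' * (b - a) * b' := by
  rw [mul_sub, sub_mul, mul_assoc, hb, ha, one_mul, mul_one]

theorem norm_sub_le_of_mul_eq_one {R : Type*} [SeminormedRing R] {a a' b b' : R}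
    (ha : a' * a = 1) (hb : b * b' = 1) : ‖a' - b'‖ ≤ ‖a'‖ * ‖a - b‖ * ‖b'‖ := by
  rw [sub_eq_mul_sub_mul_of_mul_eq_one ha hb, norm_sub_rev a]
  exact norm_mul₃_le

theorem MeasureTheory.IntegrableOn.intervalIntegrable_of_mem_Icc {E : Type*}
    [NormedAddCommGroup E] {f : ℝ → E} {a b c d : ℝ} (hf : IntegrableOn f (Icc a b)) (hc : c ∈ Icc a b)
    (hd : d ∈ Icc a b) : IntervalIntegrable f volume c d :=
  (hf.mono_set (uIcc_subset_Icc hc hd)).intervalIntegrable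

section
variable {E : Type*} [NormedAddCommGroup E] [InnerProductSpace ℝ E]

theorem MeasureTheory.Integrable.inner_apply_self {α : Type*} [MeasurableSpace α] {μ : Measure α}
    {Φ : α → E →L[ℝ] E} (hΦ : Integrable Φ μ) (z : E) : Integrable (fun r => ⟪z, Φ r z⟫) μ :=
  (hΦ.apply_continuousLinearMap z).const_inner z

theorem abs_intervalIntegral_inner_apply_self_le {Φ : ℝ → E →L[ℝ] E} {s t : ℝ} (hst : s ≤ t)
    (hΦ : IntervalIntegrable (‖Φ ·‖) volume s t) (z : E) :
    |∫ r in s..t, ⟪z, Φ r z⟫| ≤ (∫ r in s..t, ‖Φ r‖) * ‖z‖ ^ 2 := by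
  rw [← intervalIntegral.integral_mul_const, ← Real.norm_eq_abs]
  refine intervalIntegral.norm_integral_le_of_norm_le hst (.of_forall fun r _ => ?_)
    (hΦ.mul_const _)
  calc ‖⟪z, Φ r z⟫‖ ≤ ‖z‖ * ‖Φ r z‖ := norm_inner_le_norm _ _
    _ ≤ ‖z‖ * (‖Φ r‖ * ‖z‖) := by gcongr; exact (Φ r).le_opNorm z
    _ = ‖Φ r‖ * ‖z‖ ^ 2 := by ring

end

theorem iota_inv_lipschitz_bound_general
    {H : Type*} [NormedAddCommGroup H] [InnerProductSpace ℝ H]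
    (T : ℝ)
    (ip : ℝ → H → H → ℝ)
    (hsymm : ∀ t ∈ Icc (0:ℝ) T, ∀ x y : H, ip t x y = ip t y x)
    (c1 : ℝ)
    (Φ : ℝ → H →L[ℝ] H)
    (hΦmeas : AEStronglyMeasurable (fun t => Φ t) (volume.restrict (Icc (0:ℝ) T)))
    (hΦint : IntegrableOn (fun t => ‖Φ t‖) (Icc (0:ℝ) T))
    (hC2 : ∀ t ∈ Icc (0:ℝ) T, ∀ x : H, ip t x x - ⟪x, x⟫ = ∫ s in (0:ℝ)..t, ⟪x, Φ s x⟫)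
    (ι : ℝ → H →L[ℝ] H)
    (hι : ∀ t ∈ Icc (0:ℝ) T, ∀ x y : H, ⟪ι t x, y⟫ = ip t x y)
    (ιinv : ℝ → H →L[ℝ] H)
    (hιinv : ∀ t ∈ Icc (0:ℝ) T, (∀ x : H, ιinv t (ι t x) = x) ∧ (∀ x : H, ι t (ιinv t x) = x))
    (hιinvnorm : ∀ t ∈ Icc (0:ℝ) T, ‖ιinv t‖ ≤ c1 ^ 2)
    :
    ∀ s t : ℝ, 0 ≤ s → s < t → t ≤ T →
      ‖ιinv t - ιinv s‖ ≤ c1 ^ 4 * ∫ r in s..t, ‖Φ r‖ := by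
  intro s t hs hst htT
  have hsI : s ∈ Icc 0 T := ⟨hs, hst.le.trans htT⟩
  have htI : t ∈ Icc 0 T := ⟨hs.trans hst.le, htT⟩
  have h0I : (0 : ℝ) ∈ Icc 0 T := ⟨le_rfl, hsI.1.trans hsI.2⟩
  have hΦ : IntegrableOn Φ (Icc 0 T) := (integrable_norm_iff hΦmeas).1 hΦint
  have hquad (z : H) : ⟪(ι t - ι s) z, z⟫ = ∫ r in s..t, ⟪z, Φ r z⟫ := by
    have hz : IntegrableOn (fun r => ⟪z, Φ r z⟫) (Icc 0 T) := hΦ.inner_apply_self z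
    rw [← intervalIntegral.integral_interval_sub_left (hz.intervalIntegrable_of_mem_Icc h0I htI)
      (hz.intervalIntegrable_of_mem_Icc h0I hsI), sub_apply, inner_sub_left,
      hι t htI, hι s hsI]
    linarith [hC2 t htI z, hC2 s hsI z]
  have hsa : ((ι t - ι s : H →L[ℝ] H) : H →ₗ[ℝ] H).IsSymmetric := fun x y => by
    simp only [ContinuousLinearMap.coe_coe, sub_apply, inner_sub_left,
      real_inner_comm _ x, hι t htI, hι s hsI, hsymm t htI x, hsymm s hsI x]
  have hM : 0 ≤ ∫ r in s..t, ‖Φ r‖ :=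
    intervalIntegral.integral_nonneg hst.le fun r _ => norm_nonneg _
  have hdiff : ‖ι t - ι s‖ ≤ ∫ r in s..t, ‖Φ r‖ :=
    (ι t - ι s).opNorm_le_of_abs_re_inner_map_self_le hsa hM fun z => by
      simpa only [RCLike.re_to_real, hquad] using abs_intervalIntegral_inner_apply_self_le hst.le
        (hΦint.intervalIntegrable_of_mem_Icc hsI htI) z
  calc ‖ιinv t - ιinv s‖ ≤ ‖ιinv t‖ * ‖ι t - ι s‖ * ‖ιinv s‖ :=
        norm_sub_le_of_mul_eq_one (ContinuousLinearMap.ext (hιinv t htI).1)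
          (ContinuousLinearMap.ext (hιinv s hsI).2)
    _ ≤ c1 ^ 2 * (∫ r in s..t, ‖Φ r‖) * c1 ^ 2 := by
        have := hιinvnorm t htI
        have := hιinvnorm s hsI
        gcongr
    _ = c1 ^ 4 * ∫ r in s..t, ‖Φ r‖ := by ring

/-- For `0 ≤ s < t ≤ T`,
`‖ι_{-t}^* − ι_{-s}^*‖ ≤ c1⁴ ∫_s^t ‖Φ(r)‖ dr`. -/
theorem iota_inv_lipschitz_bound
    {H : Type*} [NormedAddCommGroup H] [InnerProductSpace ℝ H] [CompleteSpace H]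
    (T : ℝ) (hT : 0 < T)
    (ip : ℝ → H → H → ℝ)
    (hsymm : ∀ t ∈ Icc (0:ℝ) T, ∀ x y : H, ip t x y = ip t y x)
    (hadd : ∀ t ∈ Icc (0:ℝ) T, ∀ x x' y : H, ip t (x + x') y = ip t x y + ip t x' y)
    (hsmul : ∀ t ∈ Icc (0:ℝ) T, ∀ (c : ℝ) (x y : H), ip t (c • x) y = c * ip t x y)
    (hip0 : ∀ x y : H, ip 0 x y = ⟪x, y⟫)
    (c1 : ℝ) (hc1 : 1 ≤ c1)
    (hC1 : ∀ t ∈ Icc (0:ℝ) T, ∀ x : H,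
      c1⁻¹ * ‖x‖ ≤ Real.sqrt (ip t x x) ∧ Real.sqrt (ip t x x) ≤ c1 * ‖x‖)
    (Φ : ℝ → H →L[ℝ] H)
    (hΦsa : ∀ t ∈ Icc (0:ℝ) T, ∀ x y : H, ⟪Φ t x, y⟫ = ⟪x, Φ t y⟫)
    (hΦmeas : AEStronglyMeasurable (fun t => Φ t) (volume.restrict (Icc (0:ℝ) T)))
    (hΦint : IntegrableOn (fun t => ‖Φ t‖) (Icc (0:ℝ) T))
    (hC2 : ∀ t ∈ Icc (0:ℝ) T, ∀ x : H, ip t x x - ⟪x, x⟫ = ∫ s in (0:ℝ)..t, ⟪x, Φ s x⟫)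
    (ι : ℝ → H →L[ℝ] H)
    (hι : ∀ t ∈ Icc (0:ℝ) T, ∀ x y : H, ⟪ι t x, y⟫ = ip t x y)
    (ιinv : ℝ → H →L[ℝ] H)
    (hιinv : ∀ t ∈ Icc (0:ℝ) T, (∀ x : H, ιinv t (ι t x) = x) ∧ (∀ x : H, ι t (ιinv t x) = x))
    (hιinvnorm : ∀ t ∈ Icc (0:ℝ) T, ‖ιinv t‖ ≤ c1 ^ 2)
    :
    ∀ s t : ℝ, 0 ≤ s → s < t → t ≤ T →
      ‖ιinv t - ιinv s‖ ≤ c1 ^ 4 * ∫ r in s..t, ‖Φ r‖ :=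
  iota_inv_lipschitz_bound_general T ip hsymm c1 Φ hΦmeas hΦint hC2 ι hι ιinv hιinv hιinvnorm
end

section
/- Let Y ∈ L¹([0,T]; H) (Bochner integrable) and let X : [0,T] → H satisfy X_t = X_0 + ∫_0^t Y_s ds for all t ∈ [0,T]. Then the time-dependent squared norm of X satisfies, for every t ∈ [0,T]: |X_t|_t² = |X_0|² + ∫_0^t [ 2 (ι_s^* Y_s, X_s) + (X_s, Φ(s) X_s) ] ds. (This is the deterministic case, Z = 0, of the paper's Itô formula for time-dependent norms.) -/
open MeasureTheory Set
open scoped RealInnerProductSpace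

/-!
Put `B s = 1 + ∫₀ˢ Φ`. By (C2), `|x|_s² = ⟪x, B s x⟫`, and polarizing the symmetric form
`(·,·)_s` gives `2 (ι_s^* y, x) = ⟪y, B s x⟫ + ⟪x, B s y⟫`. Both `X` and `B` are primitives of
integrable functions, and so is any bilinear expression in two primitives, with the Leibniz rule
as integrand: this is Fubini's theorem on the triangle `{r < s}`. Applying that product rule to
`B X` and then to `⟪X, B X⟫` yields the formula.
-/

section Primitive

variable {E F G : Type*} [NormedAddCommGroup E] [NormedSpace ℝ E] [NormedAddCommGroup F]
  [NormedSpace ℝ F] [NormedAddCommGroup G] [NormedSpace ℝ G]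

theorem intervalIntegral_intervalIntegral_swap_triangle {F : ℝ → ℝ → E} {a b : ℝ} (hab : a ≤ b)
    (hF : IntegrableOn (Function.uncurry F) (Ioc a b ×ˢ Ioc a b)) :
    ∫ r in a..b, ∫ s in r..b, F s r = ∫ s in a..b, ∫ r in a..s, F s r := by
  set K : ℝ × ℝ → E := {p | p.2 < p.1}.indicator (Function.uncurry F)
  have hK : Integrable (Function.uncurry fun s r => K (s, r))
      ((volume.restrict (Ioc a b)).prod (volume.restrict (Ioc a b))) := by
    rw [Measure.prod_restrict, ← Measure.volume_eq_prod]
    exact hF.indicator (measurableSet_lt measurable_snd measurable_fst)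
  have h_row : ∀ s ∈ Ioc a b, ∫ r in Ioc a b, K (s, r) = ∫ r in a..s, F s r := by
    intro s hs
    have : (fun r => K (s, r)) = (Iio s).indicator (F s) := by
      ext r; by_cases h : r < s <;> simp [K, indicator, h]
    rw [this, integral_indicator measurableSet_Iio, Measure.restrict_restrict measurableSet_Iio,
      intervalIntegral.integral_of_le hs.1.le, integral_Ioc_eq_integral_Ioo]
    congr 2
    ext r
    simp only [mem_inter_iff, mem_Iio, mem_Ioc, mem_Ioo]
    grind
  have h_col : ∀ r ∈ Ioc a b, ∫ s in Ioc a b, K (s, r) = ∫ s in r..b, F s r := by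
    intro r hr
    have : (fun s => K (s, r)) = (Ioi r).indicator (fun s => F s r) := by
      ext s; by_cases h : r < s <;> simp [K, indicator, h]
    rw [this, integral_indicator measurableSet_Ioi, Measure.restrict_restrict measurableSet_Ioi,
      intervalIntegral.integral_of_le hr.2, inter_comm, Ioc_inter_Ioi, max_eq_right hr.1.le]
  calc ∫ r in a..b, ∫ s in r..b, F s r
      = ∫ r in Ioc a b, ∫ s in Ioc a b, K (s, r) := by
        rw [intervalIntegral.integral_of_le hab]
        exact (setIntegral_congr_fun measurableSet_Ioc h_col).symm
    _ = ∫ s in Ioc a b, ∫ r in Ioc a b, K (s, r) := (integral_integral_swap hK).symm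
    _ = ∫ s in a..b, ∫ r in a..s, F s r := by
        rw [intervalIntegral.integral_of_le hab]
        exact setIntegral_congr_fun measurableSet_Ioc h_row

namespace ContinuousLinearMap

theorem intervalIntegrable_of_bilin_of_continuousOn_right (L : E →L[ℝ] F →L[ℝ] G)
    {u : ℝ → E} {W : ℝ → F} {a b : ℝ} {μ : Measure ℝ} (hu : IntervalIntegrable u μ a b)
    (hW : ContinuousOn W (uIcc a b)) : IntervalIntegrable (fun s => L (u s) (W s)) μ a b := by
  obtain ⟨C, hC⟩ := isCompact_uIcc.exists_bound_of_continuousOn hW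
  rw [intervalIntegrable_iff] at hu ⊢
  exact L.integrable_of_bilin_of_bdd_right C hu
    ((hW.mono uIoc_subset_uIcc).aestronglyMeasurable measurableSet_uIoc)
    (ae_restrict_of_forall_mem measurableSet_uIoc fun s hs => hC s (uIoc_subset_uIcc hs))

theorem intervalIntegrable_of_bilin_of_continuousOn_left (L : E →L[ℝ] F →L[ℝ] G)
    {X : ℝ → E} {w : ℝ → F} {a b : ℝ} {μ : Measure ℝ} (hX : ContinuousOn X (uIcc a b))
    (hw : IntervalIntegrable w μ a b) : IntervalIntegrable (fun s => L (X s) (w s)) μ a b :=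
  L.flip.intervalIntegrable_of_bilin_of_continuousOn_right hw hX

variable [CompleteSpace E] [CompleteSpace F] [CompleteSpace G]

theorem intervalIntegral_bilin_integral_triangle_swap (L : E →L[ℝ] F →L[ℝ] G)
    {u : ℝ → E} {w : ℝ → F} {a b : ℝ} (hab : a ≤ b) (hu : IntervalIntegrable u volume a b)
    (hw : IntervalIntegrable w volume a b) :
    ∫ r in a..b, L (∫ s in r..b, u s) (w r) = ∫ s in a..b, L (u s) (∫ r in a..s, w r) := by
  have hK : IntegrableOn (Function.uncurry fun s r => L (u s) (w r)) (Ioc a b ×ˢ Ioc a b) := by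
    rw [IntegrableOn, Measure.volume_eq_prod, ← Measure.prod_restrict]
    rw [intervalIntegrable_iff_integrableOn_Ioc_of_le hab] at hu hw
    exact hu.op_fst_snd (op := fun x y => L x y) (by fun_prop) ⟨‖L‖, L.le_opNorm₂⟩ hw
  calc ∫ r in a..b, L (∫ s in r..b, u s) (w r)
      = ∫ r in a..b, ∫ s in r..b, L (u s) (w r) := by
        refine intervalIntegral.integral_congr fun r hr => ?_
        exact ((L.flip (w r)).intervalIntegral_comp_comm
          (hu.mono_set (uIcc_subset_uIcc hr right_mem_uIcc))).symm
    _ = ∫ s in a..b, ∫ r in a..s, L (u s) (w r) :=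
        intervalIntegral_intervalIntegral_swap_triangle hab hK
    _ = ∫ s in a..b, L (u s) (∫ r in a..s, w r) := by
        refine intervalIntegral.integral_congr fun s hs => ?_
        exact (L (u s)).intervalIntegral_comp_comm (hw.mono_set (uIcc_subset_uIcc left_mem_uIcc hs))

end ContinuousLinearMap

def IsPrimitiveOn (X u : ℝ → E) (a b : ℝ) : Prop :=
  ∀ t ∈ Icc a b, X t = X a + ∫ s in a..t, u s

namespace IsPrimitiveOn

variable {X u : ℝ → E} {a b : ℝ}

theorem mono (hX : IsPrimitiveOn X u a b) {c : ℝ} (hc : c ∈ Icc a b) : IsPrimitiveOn X u a c :=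
  fun t ht => hX t ⟨ht.1, ht.2.trans hc.2⟩

theorem continuousOn (hX : IsPrimitiveOn X u a b) (hu : IntervalIntegrable u volume a b) :
    ContinuousOn X (Icc a b) := by
  have hprim := intervalIntegral.continuousOn_primitive_interval
    ((intervalIntegrable_iff' (μ := volume)).1 hu)
  exact (continuousOn_const.add (hprim.mono Icc_subset_uIcc)).congr hX

theorem sub_eq (hX : IsPrimitiveOn X u a b) (hu : IntervalIntegrable u volume a b) {r t : ℝ}
    (hr : r ∈ Icc a b) (ht : t ∈ Icc a b) : X t - X r = ∫ s in r..t, u s := by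
  have hmono : ∀ c ∈ Icc a b, IntervalIntegrable u volume a c := fun c hc =>
    hu.mono_set (uIcc_subset_uIcc_left (Icc_subset_uIcc hc))
  rw [hX t ht, hX r hr, add_sub_add_left_eq_sub,
    intervalIntegral.integral_interval_sub_left (hmono t ht) (hmono r hr)]

variable {W w : ℝ → F}

theorem intervalIntegrable_bilin_deriv (L : E →L[ℝ] F →L[ℝ] G) (hab : a ≤ b)
    (hX : IsPrimitiveOn X u a b) (hW : IsPrimitiveOn W w a b)
    (hu : IntervalIntegrable u volume a b) (hw : IntervalIntegrable w volume a b) :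
    IntervalIntegrable (fun s => L (u s) (W s) + L (X s) (w s)) volume a b :=
  (L.intervalIntegrable_of_bilin_of_continuousOn_right hu
    (uIcc_of_le hab ▸ hW.continuousOn hw)).add
  (L.intervalIntegrable_of_bilin_of_continuousOn_left (uIcc_of_le hab ▸ hX.continuousOn hu) hw)

variable [CompleteSpace E] [CompleteSpace F] [CompleteSpace G]

theorem bilin_eq_add_integral (L : E →L[ℝ] F →L[ℝ] G) (hab : a ≤ b) (hX : IsPrimitiveOn X u a b)
    (hW : IsPrimitiveOn W w a b) (hu : IntervalIntegrable u volume a b)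
    (hw : IntervalIntegrable w volume a b) :
    L (X b) (W b) = L (X a) (W a) + ∫ s in a..b, (L (u s) (W s) + L (X s) (w s)) := by
  have hb : b ∈ Icc a b := right_mem_Icc.2 hab
  have hXc : ContinuousOn X (uIcc a b) := uIcc_of_le hab ▸ hX.continuousOn hu
  have hWc : ContinuousOn W (uIcc a b) := uIcc_of_le hab ▸ hW.continuousOn hw
  have h_tail : ∫ r in a..b, L (X b - X r) (w r) = ∫ s in a..b, L (u s) (W s - W a) := by
    calc ∫ r in a..b, L (X b - X r) (w r)
        = ∫ r in a..b, L (∫ s in r..b, u s) (w r) :=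
          intervalIntegral.integral_congr fun r hr => by
            rw [hX.sub_eq hu (uIcc_of_le hab ▸ hr) hb]
      _ = ∫ s in a..b, L (u s) (∫ r in a..s, w r) :=
          L.intervalIntegral_bilin_integral_triangle_swap hab hu hw
      _ = ∫ s in a..b, L (u s) (W s - W a) :=
          intervalIntegral.integral_congr fun s hs => by
            rw [hW.sub_eq hw (left_mem_Icc.2 hab) (uIcc_of_le hab ▸ hs)]
  have hW_b : L (X b) (W b) = L (X b) (W a) + ∫ r in a..b, L (X b) (w r) := by
    rw [hW b hb, map_add, (L (X b)).intervalIntegral_comp_comm hw]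
  have hX_b : L (X b) (W a) = L (X a) (W a) + ∫ s in a..b, L (u s) (W a) := by
    rw [hX b hb, map_add, add_apply]
    exact congrArg _ ((L.flip (W a)).intervalIntegral_comp_comm hu).symm
  have h_split : ∫ r in a..b, L (X b) (w r)
      = (∫ r in a..b, L (X r) (w r)) + ∫ r in a..b, L (X b - X r) (w r) := by
    rw [← intervalIntegral.integral_add (L.intervalIntegrable_of_bilin_of_continuousOn_left hXc hw)
      (L.intervalIntegrable_of_bilin_of_continuousOn_left (X := fun r => X b - X r)
        (continuousOn_const.sub hXc) hw)]
    congr with r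
    rw [map_sub, sub_apply, add_sub_cancel]
  have h_head : ∫ s in a..b, L (u s) (W s)
      = (∫ s in a..b, L (u s) (W a)) + ∫ s in a..b, L (u s) (W s - W a) := by
    rw [← intervalIntegral.integral_add
      (L.intervalIntegrable_of_bilin_of_continuousOn_right hu continuousOn_const)
      (L.intervalIntegrable_of_bilin_of_continuousOn_right (W := fun s => W s - W a) hu
        (hWc.sub continuousOn_const))]
    congr with s
    rw [← map_add, add_sub_cancel]
  rw [hW_b, hX_b, h_split, h_tail, intervalIntegral.integral_add
    (L.intervalIntegrable_of_bilin_of_continuousOn_right hu hWc)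
    (L.intervalIntegrable_of_bilin_of_continuousOn_left hXc hw), h_head]
  abel

theorem bilin (L : E →L[ℝ] F →L[ℝ] G) (hX : IsPrimitiveOn X u a b) (hW : IsPrimitiveOn W w a b)
    (hu : IntervalIntegrable u volume a b) (hw : IntervalIntegrable w volume a b) :
    IsPrimitiveOn (fun t => L (X t) (W t)) (fun s => L (u s) (W s) + L (X s) (w s)) a b :=
  fun _ ht => (hX.mono ht).bilin_eq_add_integral L ht.1 (hW.mono ht)
    (hu.mono_set (uIcc_subset_uIcc_left (Icc_subset_uIcc ht)))
    (hw.mono_set (uIcc_subset_uIcc_left (Icc_subset_uIcc ht)))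

end IsPrimitiveOn

end Primitive

theorem inner_intervalIntegral_apply {H : Type*} [NormedAddCommGroup H] [InnerProductSpace ℝ H]
    [CompleteSpace H] {Φ : ℝ → H →L[ℝ] H} {a b : ℝ} (hΦ : IntervalIntegrable Φ volume a b)
    (x y : H) : ⟪x, (∫ r in a..b, Φ r) y⟫ = ∫ r in a..b, ⟪x, Φ r y⟫ :=
  (((innerSL ℝ x).comp (ContinuousLinearMap.apply ℝ H y)).intervalIntegral_comp_comm hΦ).symm

theorem two_mul_eq_inner_add_inner_of_apply_self_eq {H 𝓕 : Type*} [NormedAddCommGroup H]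
    [InnerProductSpace ℝ H] [FunLike 𝓕 H H] [AddHomClass 𝓕 H H] {f : H → H → ℝ} (B : 𝓕)
    (hsymm : ∀ x y, f x y = f y x) (hadd : ∀ x x' y, f (x + x') y = f x y + f x' y)
    (hdiag : ∀ x, f x x = ⟪x, B x⟫) (x y : H) : 2 * f x y = ⟪x, B y⟫ + ⟪y, B x⟫ := by
  have h := hdiag (x + y)
  rw [hadd, hsymm x, hsymm y, hadd, hadd, hdiag x, hdiag y, hsymm y x, map_add] at h
  simp only [inner_add_left, inner_add_right] at h
  linarith

theorem ito_formula_time_dependent_norm_deterministic_general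
    {H : Type*} [NormedAddCommGroup H] [InnerProductSpace ℝ H] [CompleteSpace H]
    (T : ℝ)
    (ip : ℝ → H → H → ℝ)
    (hsymm : ∀ t ∈ Icc (0:ℝ) T, ∀ x y : H, ip t x y = ip t y x)
    (hadd : ∀ t ∈ Icc (0:ℝ) T, ∀ x x' y : H, ip t (x + x') y = ip t x y + ip t x' y)
    (Φ : ℝ → H →L[ℝ] H)
    (hΦmeas : AEStronglyMeasurable (fun t => Φ t) (volume.restrict (Icc (0:ℝ) T)))
    (hΦint : IntegrableOn (fun t => ‖Φ t‖) (Icc (0:ℝ) T))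
    (hC2 : ∀ t ∈ Icc (0:ℝ) T, ∀ x : H, ip t x x - ⟪x, x⟫ = ∫ s in (0:ℝ)..t, ⟪x, Φ s x⟫)
    (ι : ℝ → H →L[ℝ] H)
    (hι : ∀ t ∈ Icc (0:ℝ) T, ∀ x y : H, ⟪ι t x, y⟫ = ip t x y)
    (Y : ℝ → H) (hY : IntegrableOn Y (Icc (0:ℝ) T))
    (X : ℝ → H) (hX : ∀ t ∈ Icc (0:ℝ) T, X t = X 0 + ∫ s in (0:ℝ)..t, Y s)
    :
    ∀ t ∈ Icc (0:ℝ) T,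
      ip t (X t) (X t)
        = ⟪X 0, X 0⟫ + ∫ s in (0:ℝ)..t, (2 * ⟪ι s (Y s), X s⟫ + ⟪X s, Φ s (X s)⟫) := by
  intro t ht
  have hT : 0 ≤ T := ht.1.trans ht.2
  have hΦ : IntervalIntegrable Φ volume 0 T := (intervalIntegrable_iff_integrableOn_Icc_of_le hT).2
    ((integrable_norm_iff hΦmeas).1 hΦint)
  have hYT : IntervalIntegrable Y volume 0 T :=
    (intervalIntegrable_iff_integrableOn_Icc_of_le hT).2 hY
  set B : ℝ → H →L[ℝ] H := fun s => 1 + ∫ r in (0:ℝ)..s, Φ r with hB_def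
  have hB : IsPrimitiveOn B Φ 0 T := fun s _ => by simp [hB_def]
  have h_diag : ∀ s ∈ Icc 0 T, ∀ x, ip s x x = ⟪x, B s x⟫ := fun s hs x => by
    rw [hB_def, add_apply, one_apply_eq_self, inner_add_right,
      inner_intervalIntegral_apply (hΦ.mono_set (uIcc_subset_uIcc_left (Icc_subset_uIcc hs)))]
    linarith [hC2 s hs x]
  have hBX : IsPrimitiveOn (fun s => B s (X s)) (fun s => Φ s (X s) + B s (Y s)) 0 T :=
    hB.bilin (ContinuousLinearMap.id ℝ (H →L[ℝ] H)) hX hΦ hYT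
  have hXBX : IsPrimitiveOn (fun s => ⟪X s, B s (X s)⟫)
      (fun s => ⟪Y s, B s (X s)⟫ + ⟪X s, Φ s (X s) + B s (Y s)⟫) 0 T :=
    IsPrimitiveOn.bilin (innerSL ℝ) hX hBX hYT
      (hB.intervalIntegrable_bilin_deriv (ContinuousLinearMap.id ℝ (H →L[ℝ] H)) hT hX hΦ hYT)
  calc ip t (X t) (X t) = ⟪X t, B t (X t)⟫ := h_diag t ht (X t)
    _ = ⟪X 0, B 0 (X 0)⟫
          + ∫ s in (0:ℝ)..t, (⟪Y s, B s (X s)⟫ + ⟪X s, Φ s (X s) + B s (Y s)⟫) := hXBX t ht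
    _ = ⟪X 0, X 0⟫ + ∫ s in (0:ℝ)..t, (2 * ⟪ι s (Y s), X s⟫ + ⟪X s, Φ s (X s)⟫) := by
      rw [show B 0 = 1 by simp [hB_def], one_apply_eq_self]
      congr 1
      refine intervalIntegral.integral_congr fun s hs => ?_
      have hs : s ∈ Icc 0 T := Icc_subset_Icc_right ht.2 (uIcc_of_le ht.1 ▸ hs)
      have h_polar := two_mul_eq_inner_add_inner_of_apply_self_eq (B s) (hsymm s hs) (hadd s hs)
        (h_diag s hs) (Y s) (X s)
      simp only [hι s hs, h_polar, inner_add_right]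
      ring

/-- (Deterministic Itô formula for time-dependent norms.)
If `X_t = X_0 + ∫_0^t Y_s ds` with `Y ∈ L¹([0,T];H)`, then for every `t ∈ [0,T]`,
`|X_t|_t² = |X_0|² + ∫_0^t [2 (ι_s^* Y_s, X_s) + (X_s, Φ(s) X_s)] ds`. -/
theorem ito_formula_time_dependent_norm_deterministic
    {H : Type*} [NormedAddCommGroup H] [InnerProductSpace ℝ H] [CompleteSpace H]
    (T : ℝ) (hT : 0 < T)
    (ip : ℝ → H → H → ℝ)
    (hsymm : ∀ t ∈ Icc (0:ℝ) T, ∀ x y : H, ip t x y = ip t y x)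
    (hadd : ∀ t ∈ Icc (0:ℝ) T, ∀ x x' y : H, ip t (x + x') y = ip t x y + ip t x' y)
    (hsmul : ∀ t ∈ Icc (0:ℝ) T, ∀ (c : ℝ) (x y : H), ip t (c • x) y = c * ip t x y)
    (hip0 : ∀ x y : H, ip 0 x y = ⟪x, y⟫)
    (c1 : ℝ) (hc1 : 1 ≤ c1)
    (hC1 : ∀ t ∈ Icc (0:ℝ) T, ∀ x : H,
      c1⁻¹ * ‖x‖ ≤ Real.sqrt (ip t x x) ∧ Real.sqrt (ip t x x) ≤ c1 * ‖x‖)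
    (Φ : ℝ → H →L[ℝ] H)
    (hΦsa : ∀ t ∈ Icc (0:ℝ) T, ∀ x y : H, ⟪Φ t x, y⟫ = ⟪x, Φ t y⟫)
    (hΦmeas : AEStronglyMeasurable (fun t => Φ t) (volume.restrict (Icc (0:ℝ) T)))
    (hΦint : IntegrableOn (fun t => ‖Φ t‖) (Icc (0:ℝ) T))
    (hC2 : ∀ t ∈ Icc (0:ℝ) T, ∀ x : H, ip t x x - ⟪x, x⟫ = ∫ s in (0:ℝ)..t, ⟪x, Φ s x⟫)
    (ι : ℝ → H →L[ℝ] H)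
    (hι : ∀ t ∈ Icc (0:ℝ) T, ∀ x y : H, ⟪ι t x, y⟫ = ip t x y)
    (Y : ℝ → H) (hY : IntegrableOn Y (Icc (0:ℝ) T))
    (X : ℝ → H) (hX : ∀ t ∈ Icc (0:ℝ) T, X t = X 0 + ∫ s in (0:ℝ)..t, Y s)
    :
    ∀ t ∈ Icc (0:ℝ) T,
      ip t (X t) (X t)
        = ⟪X 0, X 0⟫ + ∫ s in (0:ℝ)..t, (2 * ⟪ι s (Y s), X s⟫ + ⟪X s, Φ s (X s)⟫) :=
  ito_formula_time_dependent_norm_deterministic_general T ip hsymm hadd Φ hΦmeas hΦint hC2 ι hι Y hY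
    X hX
end
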